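/- Fix 0 < a < b < 1, 0 < τ < τ′ and 0 < ε ≤ 1. Let F(t) = (1 − ε)Φ(t) + ε ∫ Φ(t − μ) dH(μ) be a one-sided Gaussian mixture (H a probability distribution with H((0,∞)) = 1) such that F(τ) = a and F(τ′) = b. Then the equation D(μ; τ, τ′) = (Φ(τ) − a)/(Φ(τ′) − b) has a unique solution μ* > 0, and the quantity ε* = (Φ(τ) − a)/(Φ(τ) − Φ(τ − μ*)) satisfies ε* ≤ ε. -/

import Mathlib

open MeasureTheory ProbabilityTheory Filter
open scoped Classical

noncomputable section

/-- The standard normal density. -/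
def stdPdf (x : ℝ) : ℝ := (Real.sqrt (2 * Real.pi))⁻¹ * Real.exp (-(x ^ 2) / 2)

/-- The standard normal cumulative distribution function. -/
def Phi (t : ℝ) : ℝ := ∫ x in Set.Iic t, stdPdf x

/-- `D(μ; τ, τ')`. -/
def Dfun (μ τ τ' : ℝ) : ℝ := (Phi τ - Phi (τ - μ)) / (Phi τ' - Phi (τ' - μ))

/-- Empirical cdf of a sample of size `n`. -/
def empCdf (n : ℕ) (X : Fin n → ℝ) (t : ℝ) : ℝ :=
  (n : ℝ)⁻¹ * ∑ i, if X i ≤ t then (1 : ℝ) else 0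

/-- Upper envelope `F⁺ₐ`. -/
def envP (n : ℕ) (a : ℝ) (G : ℝ → ℝ) (t : ℝ) : ℝ :=
  (2 * G t + a ^ 2 / n + (a / Real.sqrt n) * Real.sqrt (a ^ 2 / n + 4 * G t - 4 * (G t) ^ 2)) /
    (2 * (1 + a ^ 2 / n))

/-- Lower envelope `F⁻ₐ`. -/
def envM (n : ℕ) (a : ℝ) (G : ℝ → ℝ) (t : ℝ) : ℝ :=
  (2 * G t + a ^ 2 / n - (a / Real.sqrt n) * Real.sqrt (a ^ 2 / n + 4 * G t - 4 * (G t) ^ 2)) /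
    (2 * (1 + a ^ 2 / n))

/-- Grid points `t_j = (j - 1)/√(2 log n)`. -/
def gridPt (n : ℕ) (j : ℕ) : ℝ := ((j : ℝ) - 1) / Real.sqrt (2 * Real.log n)

/-- Right-hand side ratio used in the defining equation for `μ̂⁽ʲ⁾`. -/
def ratioJ (n : ℕ) (a : ℝ) (X : Fin n → ℝ) (j : ℕ) : ℝ :=
  (Phi (gridPt n j) - envP n a (empCdf n X) (gridPt n j)) /
    (Phi (gridPt n (j + 1)) - envM n a (empCdf n X) (gridPt n (j + 1)))

/-- `μ̂⁽ʲ⁾`: the solution of `D(μ; t_j, t_{j+1}) = ratio`, when it exists (else 0). -/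
def muHatJ (n : ℕ) (a : ℝ) (X : Fin n → ℝ) (j : ℕ) : ℝ :=
  if h : ∃ μ > 0, Dfun μ (gridPt n j) (gridPt n (j + 1)) = ratioJ n a X j then h.choose else 0

/-- `ε̂⁽ʲ⁾ₐ`. -/
def epsHatJ (n : ℕ) (a : ℝ) (X : Fin n → ℝ) (j : ℕ) : ℝ :=
  if ∃ μ > 0, Dfun μ (gridPt n j) (gridPt n (j + 1)) = ratioJ n a X j then
    (Phi (gridPt n j) - envP n a (empCdf n X) (gridPt n j)) /
      (Phi (gridPt n j) - Phi (gridPt n j - muHatJ n a X j))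
  else 0

/-- The grid estimator `ε̂*ₐ = max_j ε̂⁽ʲ⁾ₐ`. -/
def epsHatStar (n : ℕ) (a : ℝ) (X : Fin n → ℝ) : ℝ :=
  sSup ((fun j => epsHatJ n a X j) '' (Set.Icc 1 (Nat.ceil (2 * Real.log n))))

/-- The statistic `W_n⁺`, as a function of a uniform sample. -/
def WnPlus (n : ℕ) (U : Fin n → ℝ) : ℝ :=
  sSup ((fun t => Real.sqrt n * |empCdf n U t - t| / Real.sqrt (t * (1 - t))) ''
    (Set.Icc (1 / 2) (Phi (Real.sqrt (2 * Real.log n)))))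

/-- The statistic `Y_n`, as a function of the sample, for underlying cdf `F`. -/
def Yn (n : ℕ) (F : ℝ → ℝ) (X : Fin n → ℝ) : ℝ :=
  sSup ((fun t => Real.sqrt n * |empCdf n X t - F t| / Real.sqrt (F t * (1 - F t))) ''
    (Set.Icc 0 (Real.sqrt (2 * Real.log n))))

/-- The statistic `W_n⁺⁺(c₀)`, as a function of the sample, for underlying cdf `F`. -/
def WnPP (c0 : ℝ) (n : ℕ) (F : ℝ → ℝ) (X : Fin n → ℝ) : ℝ :=
  sSup ((fun x => Real.sqrt n * |empCdf n X x - F x| / Real.sqrt (F x * (1 - F x))) ''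
    {x : ℝ | empCdf n X 0 - Real.sqrt (c0 * Real.log n / n) ≤ F x ∧
      F x ≤ Phi (Real.sqrt (2 * Real.log n))})

/-- cdf of the two-point Gaussian mixture `(1-ε)N(0,1) + εN(μ,1)`. -/
def twoPointCdf (ε μ : ℝ) (t : ℝ) : ℝ := (1 - ε) * Phi t + ε * Phi (t - μ)

/-- cdf of the one-sided Gaussian mixture `(1-ε)N(0,1) + ε ∫ N(μ,1) dH(μ)`. -/
def oneSidedCdf (ε : ℝ) (H : Measure ℝ) (t : ℝ) : ℝ :=
  (1 - ε) * Phi t + ε * ∫ m, Phi (t - m) ∂H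

/-- cdf of the Uniform(0,1) distribution. -/
def unifCdf (t : ℝ) : ℝ := max 0 (min t 1)

/-- `X₁, …, Xₙ` are i.i.d. with cdf `F` under `P`. -/
def IIDWithCdf {Ω : Type} [MeasurableSpace Ω] (P : Measure Ω) {n : ℕ}
    (X : Fin n → Ω → ℝ) (F : ℝ → ℝ) : Prop :=
  (∀ i, Measurable (X i)) ∧ iIndepFun X P ∧
    ∀ i t, P {ω | X i ω ≤ t} = ENNReal.ofReal (F t)

/-- The event that `F` lies inside the envelope on `[0, √(2 log n)]`. -/
def EnvEvent (n : ℕ) (a : ℝ) (F : ℝ → ℝ) (X : Fin n → ℝ) : Prop :=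
  ∀ t ∈ Set.Icc (0 : ℝ) (Real.sqrt (2 * Real.log n)),
    envM n a (empCdf n X) t ≤ F t ∧ F t ≤ envP n a (empCdf n X) t

/-- The detection boundary `ρ*(β)`. -/
def rhoStar (β : ℝ) : ℝ :=
  if β ≤ 3 / 4 then β - 1 / 2 else (1 - Real.sqrt (1 - β)) ^ 2

/-!
Write `g_σ(m) = Φ(σ) - Φ(σ - m)`, so that `D(μ; τ, τ') = g_τ(μ) / g_τ'(μ)` and
`Φ(σ) - F(σ) = ε ∫ g_σ dH`. The normal density has a monotone likelihood ratio:
`φ(τ' - s) / φ(τ - s)` increases in `s`. Hence `D` decreases strictly on `(0, ∞)` from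
`φ(τ)/φ(τ')` to `Φ(τ)/Φ(τ')`, and averaging the pointwise bounds over `H` puts
`A / B = ∫ g_τ dH / ∫ g_τ' dH` strictly between these limits: this gives `μ*`.
The same property makes the curve `m ↦ (g_τ(m), g_τ'(m))` convex; integrating its tangent
line at `μ*` against `H` yields `A ≤ g_τ(μ*)`, which is `ε* ≤ ε`.
-/

open Set

lemma stdPdf_eq_gaussianPDFReal : stdPdf = gaussianPDFReal 0 1 := by
  ext x
  simp [stdPdf, gaussianPDFReal]

lemma stdPdf_pos (x : ℝ) : 0 < stdPdf x :=
  stdPdf_eq_gaussianPDFReal ▸ gaussianPDFReal_pos 0 1 x one_ne_zero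

@[fun_prop]
lemma continuous_stdPdf : Continuous stdPdf := by
  unfold stdPdf
  fun_prop

lemma integrable_stdPdf : Integrable stdPdf :=
  stdPdf_eq_gaussianPDFReal ▸ integrable_gaussianPDFReal 0 1

lemma integral_stdPdf : ∫ x, stdPdf x = 1 :=
  stdPdf_eq_gaussianPDFReal ▸ integral_gaussianPDFReal_eq_one 0 one_ne_zero

/-- Monotone likelihood ratio of the normal location family. -/
lemma stdPdf_sub_mul_stdPdf_sub_lt {τ τ' s u : ℝ} (hτ : τ < τ') (hsu : s < u) :
    stdPdf (τ' - s) * stdPdf (τ - u) < stdPdf (τ' - u) * stdPdf (τ - s) := by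
  simp only [stdPdf]
  rw [mul_mul_mul_comm, mul_mul_mul_comm _ (Real.exp _), ← Real.exp_add, ← Real.exp_add]
  have hlt := mul_pos (sub_pos.2 hτ) (sub_pos.2 hsu)
  exact mul_lt_mul_of_pos_left (Real.exp_lt_exp.2 (by nlinarith)) (by positivity)

lemma Phi_sub_Phi (s t : ℝ) : Phi t - Phi s = ∫ x in s..t, stdPdf x :=
  intervalIntegral.integral_Iic_sub_Iic integrable_stdPdf.integrableOn
    integrable_stdPdf.integrableOn

lemma hasDerivAt_Phi (t : ℝ) : HasDerivAt Phi (stdPdf t) t := by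
  have h : HasDerivAt (fun u => Phi 0 + ∫ x in (0 : ℝ)..u, stdPdf x) (stdPdf t) t :=
    (intervalIntegral.integral_hasDerivAt_right integrable_stdPdf.intervalIntegrable
      continuous_stdPdf.aestronglyMeasurable.stronglyMeasurableAtFilter
      continuous_stdPdf.continuousAt).const_add (Phi 0)
  refine h.congr_of_eventuallyEq (Eventually.of_forall fun u => ?_)
  simp only [← Phi_sub_Phi, add_sub_cancel]

lemma strictMono_Phi : StrictMono Phi := fun s t hst => by
  have := intervalIntegral.intervalIntegral_pos_of_pos integrable_stdPdf.intervalIntegrable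
    stdPdf_pos hst
  linarith [Phi_sub_Phi s t]

lemma Phi_pos (t : ℝ) : 0 < Phi t := by
  have : 0 ≤ Phi (t - 1) := setIntegral_nonneg measurableSet_Iic fun x _ => (stdPdf_pos x).le
  linarith [strictMono_Phi (sub_one_lt t)]

lemma Phi_le_one (t : ℝ) : Phi t ≤ 1 :=
  integral_stdPdf ▸ setIntegral_le_integral integrable_stdPdf
    (Eventually.of_forall fun x => (stdPdf_pos x).le)

lemma tendsto_Phi_atBot : Tendsto Phi atBot (nhds 0) :=
  tendsto_integral_Iic_zero tendsto_id

def cdfGap (τ m : ℝ) : ℝ := Phi τ - Phi (τ - m)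

lemma Dfun_eq_div (μ τ τ' : ℝ) : Dfun μ τ τ' = cdfGap τ μ / cdfGap τ' μ := rfl

section cdfGap

variable (τ : ℝ)

lemma cdfGap_eq_integral (m : ℝ) : cdfGap τ m = ∫ s in (0 : ℝ)..m, stdPdf (τ - s) := by
  rw [intervalIntegral.integral_comp_sub_left (fun x => stdPdf x) τ, sub_zero, cdfGap,
    Phi_sub_Phi]

lemma hasDerivAt_cdfGap (m : ℝ) : HasDerivAt (cdfGap τ) (stdPdf (τ - m)) m :=
  (((hasDerivAt_Phi (τ - m)).comp m ((hasDerivAt_id m).const_sub τ)).const_sub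
    (Phi τ)).congr_deriv (by ring)

lemma continuous_cdfGap : Continuous (cdfGap τ) :=
  continuous_iff_continuousAt.2 fun m => (hasDerivAt_cdfGap τ m).continuousAt

lemma strictMono_cdfGap : StrictMono (cdfGap τ) := fun m m' hm => by
  have := strictMono_Phi (sub_lt_sub_left hm τ)
  simp only [cdfGap]
  linarith

lemma cdfGap_zero : cdfGap τ 0 = 0 := by simp [cdfGap]

variable {τ} in
lemma cdfGap_pos {m : ℝ} (hm : 0 < m) : 0 < cdfGap τ m :=
  cdfGap_zero τ ▸ strictMono_cdfGap τ hm

lemma abs_cdfGap_le_one (m : ℝ) : |cdfGap τ m| ≤ 1 := by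
  rw [abs_le, cdfGap]
  constructor <;> linarith [Phi_pos τ, Phi_pos (τ - m), Phi_le_one τ, Phi_le_one (τ - m)]

lemma tendsto_cdfGap_atTop : Tendsto (cdfGap τ) atTop (nhds (Phi τ)) := by
  have hshift : Tendsto (fun m => τ - m) atTop atBot := by
    simpa only [← sub_eq_add_neg] using tendsto_atBot_add_const_left _ τ tendsto_neg_atTop_atBot
  have h := (tendsto_Phi_atBot.comp hshift).const_sub (Phi τ)
  rwa [sub_zero] at h

end cdfGap

section LikelihoodRatio

variable {τ τ' m : ℝ}

lemma stdPdf_sub_mul_cdfGap_lt (hτ : τ < τ') (hm : 0 < m) :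
    stdPdf (τ - m) * cdfGap τ' m < stdPdf (τ' - m) * cdfGap τ m := by
  rw [cdfGap_eq_integral, cdfGap_eq_integral, ← intervalIntegral.integral_const_mul,
    ← intervalIntegral.integral_const_mul]
  refine intervalIntegral.integral_lt_integral_of_continuousOn_of_le_of_exists_lt hm
    (by fun_prop) (by fun_prop) (fun s hs => ?_) ⟨0, ⟨le_rfl, hm.le⟩, ?_⟩
  · rcases hs.2.lt_or_eq with hsm | rfl
    · linarith [stdPdf_sub_mul_stdPdf_sub_lt hτ hsm]
    · rw [mul_comm]
  · linarith [stdPdf_sub_mul_stdPdf_sub_lt hτ hm]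

lemma stdPdf_mul_cdfGap_lt (hτ : τ < τ') (hm : 0 < m) :
    stdPdf τ' * cdfGap τ m < stdPdf τ * cdfGap τ' m := by
  rw [cdfGap_eq_integral, cdfGap_eq_integral, ← intervalIntegral.integral_const_mul,
    ← intervalIntegral.integral_const_mul]
  refine intervalIntegral.integral_lt_integral_of_continuousOn_of_le_of_exists_lt hm
    (by fun_prop) (by fun_prop) (fun s hs => ?_) ⟨m, ⟨hm.le, le_rfl⟩, ?_⟩
  · have := stdPdf_sub_mul_stdPdf_sub_lt hτ hs.1
    simp only [sub_zero] at this
    linarith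
  · have := stdPdf_sub_mul_stdPdf_sub_lt hτ hm
    simp only [sub_zero] at this
    linarith

/-- The curve `m ↦ (g_τ(m), g_τ'(m))` lies above its tangent line at `μ`. -/
lemma cdfGap_sub_mul_cdfGap_le (hτ : τ < τ') (μ m : ℝ) :
    cdfGap τ' μ - stdPdf (τ' - μ) / stdPdf (τ - μ) * cdfGap τ μ ≤
      cdfGap τ' m - stdPdf (τ' - μ) / stdPdf (τ - μ) * cdfGap τ m := by
  set c := stdPdf (τ' - μ) / stdPdf (τ - μ)
  have hderiv (x : ℝ) : HasDerivAt (fun m => cdfGap τ' m - c * cdfGap τ m)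
      (stdPdf (τ' - x) - c * stdPdf (τ - x)) x :=
    (hasDerivAt_cdfGap τ' x).sub ((hasDerivAt_cdfGap τ x).const_mul c)
  have hdiff : Differentiable ℝ (fun m => cdfGap τ' m - c * cdfGap τ m) :=
    fun x => (hderiv x).differentiableAt
  refine isMinOn_univ_of_deriv hdiff.continuous.continuousAt hdiff.differentiableOn
    hdiff.differentiableOn (fun x hx => ?_) (fun x hx => ?_) (mem_univ m)
  · rw [(hderiv x).deriv, sub_nonpos, div_mul_eq_mul_div, le_div_iff₀ (stdPdf_pos _)]
    exact (stdPdf_sub_mul_stdPdf_sub_lt hτ hx).le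
  · rw [(hderiv x).deriv, sub_nonneg, div_mul_eq_mul_div, div_le_iff₀ (stdPdf_pos _)]
    exact (stdPdf_sub_mul_stdPdf_sub_lt hτ hx).le

end LikelihoodRatio

section Dfun

variable {τ τ' : ℝ}

lemma continuousOn_Dfun : ContinuousOn (fun μ => Dfun μ τ τ') (Ioi 0) :=
  (continuous_cdfGap τ).continuousOn.div (continuous_cdfGap τ').continuousOn
    fun _ hμ => (cdfGap_pos hμ).ne'

lemma strictAntiOn_Dfun (hτ : τ < τ') : StrictAntiOn (fun μ => Dfun μ τ τ') (Ioi 0) := by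
  refine strictAntiOn_of_deriv_neg (convex_Ioi 0) continuousOn_Dfun fun μ hμ => ?_
  rw [interior_Ioi] at hμ
  have hderiv : HasDerivAt (fun μ => Dfun μ τ τ')
      ((stdPdf (τ - μ) * cdfGap τ' μ - cdfGap τ μ * stdPdf (τ' - μ)) / cdfGap τ' μ ^ 2) μ :=
    (hasDerivAt_cdfGap τ μ).div (hasDerivAt_cdfGap τ' μ) (cdfGap_pos hμ).ne'
  rw [hderiv.deriv]
  have := stdPdf_sub_mul_cdfGap_lt hτ hμ
  exact div_neg_of_neg_of_pos (by linarith) (pow_pos (cdfGap_pos hμ) 2)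

lemma tendsto_Dfun_atTop : Tendsto (fun μ => Dfun μ τ τ') atTop (nhds (Phi τ / Phi τ')) :=
  (tendsto_cdfGap_atTop τ).div (tendsto_cdfGap_atTop τ') (Phi_pos τ').ne'

lemma tendsto_Dfun_zero :
    Tendsto (fun μ => Dfun μ τ τ') (nhdsWithin 0 (Ioi 0)) (nhds (stdPdf τ / stdPdf τ')) := by
  have hslope (σ : ℝ) :
      Tendsto (fun μ => μ⁻¹ * cdfGap σ μ) (nhdsWithin 0 (Ioi 0)) (nhds (stdPdf σ)) := by
    simpa [cdfGap_zero] using (hasDerivAt_cdfGap σ 0).tendsto_slope_zero_right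
  refine ((hslope τ).div (hslope τ') (stdPdf_pos τ').ne').congr' ?_
  filter_upwards [self_mem_nhdsWithin] with μ hμ
  rw [Pi.div_apply, Dfun_eq_div, mul_div_mul_left _ _ (inv_ne_zero (ne_of_gt hμ))]

lemma Phi_div_Phi_lt_Dfun (hτ : τ < τ') {m : ℝ} (hm : 0 < m) :
    Phi τ / Phi τ' < Dfun m τ τ' := by
  have hm1 : (0 : ℝ) < m + 1 := by linarith
  have hlim : Phi τ / Phi τ' ≤ Dfun (m + 1) τ τ' := by
    refine le_of_tendsto tendsto_Dfun_atTop ?_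
    filter_upwards [eventually_ge_atTop (m + 1)] with μ hμ
    exact (strictAntiOn_Dfun hτ).antitoneOn hm1 (hm1.trans_le hμ) hμ
  exact hlim.trans_lt (strictAntiOn_Dfun hτ hm hm1 (lt_add_one m))

lemma exists_Dfun_eq {r : ℝ} (hr₁ : Phi τ / Phi τ' < r)
    (hr₂ : r < stdPdf τ / stdPdf τ') : ∃ μ, 0 < μ ∧ Dfun μ τ τ' = r := by
  obtain ⟨μ₁, hμ₁r, hμ₁⟩ : ∃ μ₁, r < Dfun μ₁ τ τ' ∧ 0 < μ₁ :=
    ((tendsto_Dfun_zero.eventually (eventually_gt_nhds hr₂)).and self_mem_nhdsWithin).exists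
  obtain ⟨μ₂, hμ₂r, hμ₁₂⟩ : ∃ μ₂, Dfun μ₂ τ τ' < r ∧ μ₁ < μ₂ :=
    ((tendsto_Dfun_atTop.eventually (eventually_lt_nhds hr₁)).and
      (eventually_gt_atTop μ₁)).exists
  obtain ⟨μ, hμ, hμr⟩ := intermediate_value_Icc' hμ₁₂.le
    (continuousOn_Dfun.mono fun x hx => hμ₁.trans_le hx.1) ⟨hμ₂r.le, hμ₁r.le⟩
  exact ⟨μ, hμ₁.trans_le hμ.1, hμr⟩

end Dfun

lemma integral_lt_integral_of_ae_lt {α : Type*} [MeasurableSpace α] {μ : Measure α} [NeZero μ]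
    {f g : α → ℝ} (hf : Integrable f μ) (hg : Integrable g μ) (hfg : ∀ᵐ x ∂μ, f x < g x) :
    ∫ x, f x ∂μ < ∫ x, g x ∂μ := by
  have hpos : ∀ᵐ x ∂μ, 0 < g x - f x := hfg.mono fun x h => sub_pos.2 h
  rw [← sub_pos, ← integral_sub hg hf, integral_pos_iff_support_of_nonneg_ae
    (hpos.mono fun _ h => h.le) (hg.sub hf), pos_iff_ne_zero]
  intro hzero
  obtain ⟨x, hx, hx0⟩ := (hpos.and (measure_eq_zero_iff_ae_notMem.1 hzero)).exists
  exact hx0 hx.ne'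

section Mixture

variable {H : Measure ℝ} [IsProbabilityMeasure H]

lemma integrable_cdfGap (τ : ℝ) : Integrable (cdfGap τ) H :=
  .of_bound (continuous_cdfGap τ).aestronglyMeasurable 1
    (Eventually.of_forall (abs_cdfGap_le_one τ))

lemma Phi_sub_oneSidedCdf (ε t : ℝ) :
    Phi t - oneSidedCdf ε H t = ε * ∫ m, cdfGap t m ∂H := by
  have hPhi : ∫ m, Phi (t - m) ∂H = Phi t - ∫ m, cdfGap t m ∂H := by
    calc ∫ m, Phi (t - m) ∂H = ∫ m, (Phi t - cdfGap t m) ∂H := by simp [cdfGap]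
      _ = Phi t - ∫ m, cdfGap t m ∂H := by
        rw [integral_sub (integrable_const _) (integrable_cdfGap t), integral_const,
          probReal_univ, one_smul]
  rw [oneSidedCdf, hPhi]
  ring

variable {τ τ' : ℝ}

lemma integral_cdfGap_pos (hH : ∀ᵐ m ∂H, 0 < m) : 0 < ∫ m, cdfGap τ m ∂H := by
  simpa using integral_lt_integral_of_ae_lt (integrable_const 0) (integrable_cdfGap τ)
    (hH.mono fun _ => cdfGap_pos)

lemma Phi_div_Phi_lt_integral_div (hτ : τ < τ') (hH : ∀ᵐ m ∂H, 0 < m) :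
    Phi τ / Phi τ' < (∫ m, cdfGap τ m ∂H) / ∫ m, cdfGap τ' m ∂H := by
  rw [div_lt_div_iff₀ (Phi_pos τ') (integral_cdfGap_pos hH), ← integral_const_mul,
    ← integral_mul_const]
  refine integral_lt_integral_of_ae_lt ((integrable_cdfGap τ').const_mul _)
    ((integrable_cdfGap τ).mul_const _) (hH.mono fun m hm => ?_)
  have := Phi_div_Phi_lt_Dfun hτ hm
  rwa [Dfun_eq_div, div_lt_div_iff₀ (Phi_pos τ') (cdfGap_pos hm)] at this

lemma integral_div_lt_stdPdf_div (hτ : τ < τ') (hH : ∀ᵐ m ∂H, 0 < m) :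
    (∫ m, cdfGap τ m ∂H) / (∫ m, cdfGap τ' m ∂H) < stdPdf τ / stdPdf τ' := by
  rw [div_lt_div_iff₀ (integral_cdfGap_pos hH) (stdPdf_pos τ'), ← integral_const_mul,
    ← integral_mul_const]
  refine integral_lt_integral_of_ae_lt ((integrable_cdfGap τ).mul_const _)
    ((integrable_cdfGap τ').const_mul _) (hH.mono fun m hm => ?_)
  linarith [stdPdf_mul_cdfGap_lt hτ hm]

lemma integral_cdfGap_le_of_Dfun_eq (hτ : τ < τ') (hH : ∀ᵐ m ∂H, 0 < m) {μ : ℝ} (hμ : 0 < μ)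
    (hD : Dfun μ τ τ' = (∫ m, cdfGap τ m ∂H) / ∫ m, cdfGap τ' m ∂H) :
    ∫ m, cdfGap τ m ∂H ≤ cdfGap τ μ := by
  set A := ∫ m, cdfGap τ m ∂H
  set B := ∫ m, cdfGap τ' m ∂H
  set c := stdPdf (τ' - μ) / stdPdf (τ - μ)
  have hg := cdfGap_pos (τ := τ) hμ
  have hsupport : cdfGap τ' μ - c * cdfGap τ μ ≤ B - c * A := by
    have := integral_mono (μ := H) (g := fun m => cdfGap τ' m - c * cdfGap τ m)
      (integrable_const _)
      ((integrable_cdfGap τ').sub ((integrable_cdfGap τ).const_mul c))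
      (cdfGap_sub_mul_cdfGap_le hτ μ)
    rwa [integral_const, probReal_univ, one_smul, integral_sub (integrable_cdfGap τ')
      ((integrable_cdfGap τ).const_mul c), integral_const_mul] at this
  have hcross : cdfGap τ μ * B = A * cdfGap τ' μ := by
    rwa [Dfun_eq_div, div_eq_div_iff (cdfGap_pos hμ).ne' (integral_cdfGap_pos hH).ne'] at hD
  have htangent : cdfGap τ' μ < c * cdfGap τ μ := by
    rw [div_mul_eq_mul_div, lt_div_iff₀ (stdPdf_pos _), mul_comm]
    exact stdPdf_sub_mul_cdfGap_lt hτ hμ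
  -- `g_τ(μ) · hsupport` and `hcross` give `(A - g_τ(μ)) (g_τ'(μ) - c g_τ(μ)) ≥ 0`.
  by_contra! hA
  nlinarith [mul_pos (sub_pos.2 hA) (sub_pos.2 htangent), mul_le_mul_of_nonneg_left hsupport hg.le]

end Mixture

theorem stmt10_general (a b τ τ' ε : ℝ) (hττ' : τ < τ') (hε : 0 < ε)
    (H : Measure ℝ) (hH : IsProbabilityMeasure H) (hHpos : H (Set.Ioi 0) = 1)
    (hFa : oneSidedCdf ε H τ = a) (hFb : oneSidedCdf ε H τ' = b) :
    ∃ μstar : ℝ, 0 < μstar ∧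
      Dfun μstar τ τ' = (Phi τ - a) / (Phi τ' - b) ∧
      (∀ m : ℝ, 0 < m → Dfun m τ τ' = (Phi τ - a) / (Phi τ' - b) → m = μstar) ∧
      (Phi τ - a) / (Phi τ - Phi (τ - μstar)) ≤ ε := by
  have hpos : ∀ᵐ m ∂H, 0 < m := (mem_ae_iff_prob_eq_one measurableSet_Ioi).2 hHpos
  have hA : Phi τ - a = ε * ∫ m, cdfGap τ m ∂H := hFa ▸ Phi_sub_oneSidedCdf ε τ
  have hB : Phi τ' - b = ε * ∫ m, cdfGap τ' m ∂H := hFb ▸ Phi_sub_oneSidedCdf ε τ'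
  have hratio : (Phi τ - a) / (Phi τ' - b) =
      (∫ m, cdfGap τ m ∂H) / ∫ m, cdfGap τ' m ∂H := by
    rw [hA, hB, mul_div_mul_left _ _ hε.ne']
  obtain ⟨μ, hμ, hDμ⟩ := exists_Dfun_eq (Phi_div_Phi_lt_integral_div hττ' hpos)
    (integral_div_lt_stdPdf_div hττ' hpos)
  refine ⟨μ, hμ, hratio ▸ hDμ, fun m hm hDm => ?_, ?_⟩
  · exact (strictAntiOn_Dfun hττ').injOn hm hμ (hDm.trans (hratio ▸ hDμ.symm))
  · change _ / cdfGap τ μ ≤ ε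
    rw [hA, div_le_iff₀ (cdfGap_pos hμ)]
    exact mul_le_mul_of_nonneg_left (integral_cdfGap_le_of_Dfun_eq hττ' hpos hμ hDμ) hε.le

/-- Lemma 5.1: among all one-sided Gaussian mixtures passing
through `(τ, a)` and `(τ', b)`, the two-point mixture has the smallest fraction. -/
theorem stmt10 (a b τ τ' ε : ℝ) (ha : 0 < a) (hab : a < b) (hb : b < 1)
    (hτ : 0 < τ) (hττ' : τ < τ') (hε : 0 < ε) (hε1 : ε ≤ 1)
    (H : Measure ℝ) (hH : IsProbabilityMeasure H) (hHpos : H (Set.Ioi 0) = 1)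
    (hFa : oneSidedCdf ε H τ = a) (hFb : oneSidedCdf ε H τ' = b) :
    ∃ μstar : ℝ, 0 < μstar ∧
      Dfun μstar τ τ' = (Phi τ - a) / (Phi τ' - b) ∧
      (∀ m : ℝ, 0 < m → Dfun m τ τ' = (Phi τ - a) / (Phi τ' - b) → m = μstar) ∧
      (Phi τ - a) / (Phi τ - Phi (τ - μstar)) ≤ ε :=
  stmt10_general a b τ τ' ε hττ' hε H hH hHpos hFa hFb
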